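/- arXiv:2407.11797 — 2 statements merged into one kernel-verified Lean document; each statement's English description precedes it below -/
import Mathlib

section
/- Let K be a scattering kernel and let φ ∈ L^∞(S²) satisfy H[φ] = φ almost everywhere on S². Then φ is almost everywhere equal to a constant. -/
/-!
Since `SO(3)` acts transitively on pairs of unit vectors with a prescribed inner product,
`K n n'` depends only on `⟪n, n'⟫`; in particular `K` is symmetric and `H` fixes constants.
The function `F = H[φ]` is continuous, equals `φ` almost everywhere and satisfies `H[F] = F`
everywhere. At a point `m` where `F` reaches its maximum `M`, the integral of the non-negative
continuous function `K m · * (M - F)` vanishes, so `F = M` wherever `K m · > 0`. Since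
`K n₀ ·` has mass one and `{n₀, -n₀}` is null, `K` is positive at some inner product `t` with
`|t| < 1`, so the set `{F = M}` is closed under moving by the angle `arccos t`. Two such moves
reach every point within twice that angle, i.e. with `⟪m, n⟫ ≥ 2 t ^ 2 - 1`; iterating the
doubling reaches a hemisphere, and from there the whole sphere.
-/

open MeasureTheory Metric

noncomputable section

/-- The ambient Euclidean space `ℝ³`. -/
abbrev E3 : Type := EuclideanSpace ℝ (Fin 3)

/-- The unit sphere `S² ⊂ ℝ³`. -/
abbrev S2 : Type := Metric.sphere (0 : E3) 1

/-- The surface measure on the unit sphere `S²` (with total mass `4π`). -/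
def μS : Measure S2 := (volume : Measure E3).toSphere

/-- A rotation of `ℝ³`: an orthogonal (i.e. norm preserving linear) transformation with
determinant `1`, i.e. an element of `SO(3)`. -/
def IsRotation (R : E3 ≃ₗᵢ[ℝ] E3) : Prop :=
  LinearMap.det (R.toLinearEquiv : E3 →ₗ[ℝ] E3) = 1

/-- The action of an orthogonal transformation on the unit sphere. -/
def rotate (R : E3 ≃ₗᵢ[ℝ] E3) (n : S2) : S2 :=
  ⟨R n, by
    have hn : ‖(n : E3)‖ = 1 := mem_sphere_zero_iff_norm.mp n.2
    simp [mem_sphere_zero_iff_norm, hn]⟩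

/-- A scattering kernel: a continuous, non-negative, rotation invariant function
`K : S² × S² → ℝ` with `∫_{S²} K(n,n') dn = 1` for every `n'`. -/
structure IsScatteringKernel (K : S2 → S2 → ℝ) : Prop where
  continuous : Continuous (Function.uncurry K)
  nonneg : ∀ n n' : S2, 0 ≤ K n n'
  normalized : ∀ n' : S2, ∫ n : S2, K n n' ∂μS = 1
  rotation_invariant : ∀ R : E3 ≃ₗᵢ[ℝ] E3, IsRotation R →
    ∀ n n' : S2, K (rotate R n) (rotate R n') = K n n'

/-- `1 - s` at least doubles under `s ↦ 2 s ^ 2 - 1` as long as `0 < s`. -/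
theorem exists_nonpos_of_two_sq_sub_one {P : ℝ → Prop}
    (hP : ∀ s, 0 < s → P s → P (2 * s ^ 2 - 1)) {s₀ : ℝ} (hs₀ : s₀ < 1) (h₀ : P s₀) :
    ∃ s ≤ 0, P s := by
  have of_le_two_pow_mul : ∀ k : ℕ, ∀ s, P s → 1 ≤ 2 ^ k * (1 - s) → ∃ s ≤ 0, P s := by
    intro k
    induction k with
    | zero => exact fun s hPs h => ⟨s, by linarith, hPs⟩
    | succ k ih =>
      intro s hPs h
      rcases le_or_gt s 0 with hs | hs
      · exact ⟨s, hs, hPs⟩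
      refine ih _ (hP s hs hPs) ?_
      have hs1 : s < 1 := by nlinarith [pow_pos (two_pos (α := ℝ)) (k + 1)]
      calc 1 ≤ 2 ^ (k + 1) * (1 - s) := h
        _ = 2 ^ k * (2 * (1 - s)) := by ring
        _ ≤ 2 ^ k * (1 - (2 * s ^ 2 - 1)) := by gcongr; nlinarith
  obtain ⟨k, hk⟩ := pow_unbounded_of_one_lt (1 / (1 - s₀)) one_lt_two
  exact of_le_two_pow_mul k s₀ h₀ ((div_lt_iff₀ (sub_pos.2 hs₀)).1 hk).le

theorem LinearIsometryEquiv.det_trans {E : Type*} [NormedAddCommGroup E] [NormedSpace ℝ E]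
    (R₁ R₂ : E ≃ₗᵢ[ℝ] E) :
    LinearMap.det ((R₁.trans R₂).toLinearEquiv : E →ₗ[ℝ] E) =
      LinearMap.det (R₂.toLinearEquiv : E →ₗ[ℝ] E) * LinearMap.det (R₁.toLinearEquiv : E →ₗ[ℝ] E) :=
  LinearMap.det_comp _ _

section SphereGeometry

open Module RealInnerProductSpace

variable {E : Type*} [NormedAddCommGroup E] [InnerProductSpace ℝ E] [FiniteDimensional ℝ E]

theorem exists_norm_eq_one_inner_eq_zero_inner_eq_zero (hE : 3 ≤ finrank ℝ E) (m n : E) :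
    ∃ w : E, ‖w‖ = 1 ∧ ⟪m, w⟫ = 0 ∧ ⟪n, w⟫ = 0 := by
  set S := Submodule.span ℝ (Set.range ![m, n])
  have hS : finrank ℝ S ≤ 2 :=
    (finrank_range_le_card (R := ℝ) ![m, n]).trans_eq (Fintype.card_fin 2)
  have hSperp : Sᗮ ≠ ⊥ := by
    intro h
    have := S.finrank_add_finrank_orthogonal
    rw [h, finrank_bot] at this
    omega
  obtain ⟨v, hvS, hv⟩ := Submodule.exists_mem_ne_zero_of_ne_bot hSperp
  have hw : ‖v‖⁻¹ • v ∈ Sᗮ := Sᗮ.smul_mem _ hvS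
  refine ⟨‖v‖⁻¹ • v, norm_smul_inv_norm hv, ?_, ?_⟩ <;>
    exact Submodule.inner_right_of_mem_orthogonal (Submodule.subset_span (by simp)) hw

theorem exists_norm_eq_one_inner_eq_inner_eq (hE : 3 ≤ finrank ℝ E) {m n : E} (hm : ‖m‖ = 1)
    (hn : ‖n‖ = 1) {t : ℝ} (ht : 2 * t ^ 2 - 1 ≤ ⟪m, n⟫) :
    ∃ q : E, ‖q‖ = 1 ∧ ⟪m, q⟫ = t ∧ ⟪n, q⟫ = t := by
  obtain ⟨w, hw, hmw, hnw⟩ := exists_norm_eq_one_inner_eq_zero_inner_eq_zero hE m n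
  set c := ⟪m, n⟫ with hc
  have hc1 : -1 ≤ c := by
    have := neg_le_of_abs_le (abs_real_inner_le_norm m n); rwa [hm, hn, one_mul] at this
  rcases hc1.eq_or_lt with hc1 | hc1
  · have ht0 : t = 0 := by nlinarith
    exact ⟨w, hw, by rw [hmw, ht0], by rw [hnw, ht0]⟩
  have hpos : 0 < 1 + c := by linarith
  set β := √(1 - 2 * t ^ 2 / (1 + c))
  have hβ : (1 + c) * β ^ 2 = 1 + c - 2 * t ^ 2 := by
    rw [Real.sq_sqrt (by rw [sub_nonneg, div_le_one hpos]; linarith)]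
    field_simp
  have hnc : ⟪n, m⟫ = c := real_inner_comm m n
  have hmm : ⟪m, m⟫ = 1 := by rw [real_inner_self_eq_norm_sq, hm, one_pow]
  have hnn : ⟪n, n⟫ = 1 := by rw [real_inner_self_eq_norm_sq, hn, one_pow]
  have hww : ⟪w, w⟫ = 1 := by rw [real_inner_self_eq_norm_sq, hw, one_pow]
  refine ⟨(t / (1 + c)) • (m + n) + β • w, ?_, ?_, ?_⟩
  · rw [← pow_left_inj₀ (norm_nonneg _) zero_le_one two_ne_zero, one_pow,
      ← real_inner_self_eq_norm_sq]
    simp only [inner_add_left, inner_add_right, real_inner_smul_left, real_inner_smul_right,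
      hmm, hnn, hww, hmw, hnw, real_inner_comm m w, real_inner_comm n w, ← hc, hnc]
    field_simp
    linear_combination (1 + c) * hβ
  · simp only [inner_add_right, real_inner_smul_right, hmm, hmw, ← hc]
    field_simp
    ring
  · simp only [inner_add_right, real_inner_smul_right, hnn, hnw, hnc]
    field_simp
    ring

theorem det_reflection_orthogonal_span_singleton {w : E} (hw : w ≠ 0) :
    LinearMap.det ((ℝ ∙ w)ᗮ.reflection.toLinearEquiv : E →ₗ[ℝ] E) = -1 := by
  refine (Submodule.det_reflection _).trans ?_
  rw [Submodule.orthogonal_orthogonal, finrank_span_singleton hw, pow_one]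

/-- Reflect `a` to `c` in the hyperplane `(a - c)ᗮ`, then the image of `b` to `d` in a hyperplane
containing `c`. -/
theorem exists_linearIsometryEquiv_apply_eq_apply_eq {a b c d : E} (hac : ‖a‖ = ‖c‖)
    (hbd : ‖b‖ = ‖d‖) (habcd : ⟪a, b⟫ = ⟪c, d⟫) :
    ∃ R : E ≃ₗᵢ[ℝ] E, (LinearMap.det (R.toLinearEquiv : E →ₗ[ℝ] E) = 1 ∨
      LinearMap.det (R.toLinearEquiv : E →ₗ[ℝ] E) = -1) ∧ R a = c ∧ R b = d := by
  set ρ₁ := (ℝ ∙ (a - c))ᗮ.reflection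
  have hρ₁a : ρ₁ a = c := Submodule.reflection_sub hac
  have hρ₁b : ‖ρ₁ b‖ = ‖d‖ := (ρ₁.norm_map b).trans hbd
  set ρ₂ := (ℝ ∙ (ρ₁ b - d))ᗮ.reflection
  have hρ₂c : ρ₂ c = c := by
    refine Submodule.reflection_mem_subspace_eq_self ?_
    rw [Submodule.mem_orthogonal_singleton_iff_inner_right, inner_sub_left, ← hρ₁a,
      LinearIsometryEquiv.inner_map_map, hρ₁a, real_inner_comm, habcd, real_inner_comm, sub_self]
  refine ⟨ρ₁.trans ρ₂, ?_, by simp [hρ₁a, hρ₂c], Submodule.reflection_sub hρ₁b⟩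
  rw [LinearIsometryEquiv.det_trans, Submodule.det_reflection, Submodule.det_reflection, ← pow_add]
  exact neg_one_pow_eq_or ℝ _

theorem exists_linearIsometryEquiv_det_eq_one_apply_eq_apply_eq (hE : 3 ≤ finrank ℝ E)
    {a b c d : E} (hac : ‖a‖ = ‖c‖) (hbd : ‖b‖ = ‖d‖) (habcd : ⟪a, b⟫ = ⟪c, d⟫) :
    ∃ R : E ≃ₗᵢ[ℝ] E, LinearMap.det (R.toLinearEquiv : E →ₗ[ℝ] E) = 1 ∧ R a = c ∧ R b = d := by
  obtain ⟨R, hdet | hdet, hRa, hRb⟩ := exists_linearIsometryEquiv_apply_eq_apply_eq hac hbd habcd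
  · exact ⟨R, hdet, hRa, hRb⟩
  obtain ⟨w, hw, hcw, hdw⟩ := exists_norm_eq_one_inner_eq_zero_inner_eq_zero hE c d
  set ρ := (ℝ ∙ w)ᗮ.reflection
  have hρ : ∀ x, ⟪x, w⟫ = 0 → ρ x = x := fun x hx =>
    Submodule.reflection_mem_subspace_eq_self
      (Submodule.mem_orthogonal_singleton_iff_inner_right.2 (by rwa [real_inner_comm]))
  refine ⟨R.trans ρ, ?_, by simp [hRa, hρ c hcw], by simp [hRb, hρ d hdw]⟩
  rw [LinearIsometryEquiv.det_trans, hdet,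
    det_reflection_orthogonal_span_singleton (norm_ne_zero_iff.1 (hw.trans_ne one_ne_zero))]
  norm_num

def IsCapClosed (A : Set (sphere (0 : E) 1)) (s : ℝ) : Prop :=
  ∀ m ∈ A, ∀ n : sphere (0 : E) 1, s ≤ ⟪(m : E), n⟫ → n ∈ A

variable {A : Set (sphere (0 : E) 1)}

theorem isCapClosed_two_sq_sub_one (hE : 3 ≤ finrank ℝ E) {t : ℝ}
    (hA : ∀ m ∈ A, ∀ n : sphere (0 : E) 1, ⟪(m : E), n⟫ = t → n ∈ A) :
    IsCapClosed A (2 * t ^ 2 - 1) := by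
  intro m hm n hmn
  obtain ⟨q, hq, hmq, hnq⟩ := exists_norm_eq_one_inner_eq_inner_eq hE (norm_eq_of_mem_sphere m)
    (norm_eq_of_mem_sphere n) hmn
  refine hA ⟨q, mem_sphere_zero_iff_norm.2 hq⟩ (hA m hm _ hmq) n ?_
  rw [real_inner_comm]
  exact hnq

theorem IsCapClosed.two_sq_sub_one (hE : 3 ≤ finrank ℝ E) {s : ℝ} (hA : IsCapClosed A s) :
    IsCapClosed A (2 * s ^ 2 - 1) := by
  intro m hm n hmn
  set t := √((1 + ⟪(m : E), n⟫) / 2)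
  have hst : s ≤ t := Real.le_sqrt_of_sq_le (by linarith)
  obtain ⟨q, hq, hmq, hnq⟩ := exists_norm_eq_one_inner_eq_inner_eq (t := t) hE
    (norm_eq_of_mem_sphere m) (norm_eq_of_mem_sphere n)
    (by rw [Real.sq_sqrt (by nlinarith)]; linarith)
  refine hA ⟨q, mem_sphere_zero_iff_norm.2 hq⟩ (hA m hm _ (hmq ▸ hst)) n ?_
  rw [real_inner_comm]
  exact hnq ▸ hst

theorem IsCapClosed.eq_univ (hE : 3 ≤ finrank ℝ E) {s : ℝ} (hA : IsCapClosed A s) (hs : s ≤ 0)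
    (hne : A.Nonempty) : A = Set.univ := by
  obtain ⟨m, hm⟩ := hne
  refine Set.eq_univ_of_forall fun n => ?_
  obtain ⟨w, hw, hmw, hnw⟩ := exists_norm_eq_one_inner_eq_zero_inner_eq_zero hE m n
  refine hA ⟨w, mem_sphere_zero_iff_norm.2 hw⟩ (hA m hm _ (hmw ▸ hs)) n ?_
  rw [real_inner_comm]
  exact hnw ▸ hs

theorem eq_univ_of_forall_inner_eq_mem (hE : 3 ≤ finrank ℝ E) {t : ℝ} (ht : |t| < 1)
    (hA : ∀ m ∈ A, ∀ n : sphere (0 : E) 1, ⟪(m : E), n⟫ = t → n ∈ A) (hne : A.Nonempty) :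
    A = Set.univ := by
  have ht₂ : 2 * t ^ 2 - 1 < 1 := by nlinarith [sq_lt_one_iff_abs_lt_one t |>.2 ht]
  obtain ⟨s, hs, hAs⟩ := exists_nonpos_of_two_sq_sub_one (P := IsCapClosed A)
    (fun _ _ h => h.two_sq_sub_one hE) ht₂ (isCapClosed_two_sq_sub_one hE hA)
  exact hAs.eq_univ hE hs hne

end SphereGeometry

section

variable {X : Type*} [TopologicalSpace X] [CompactSpace X] [MeasurableSpace X]
  [OpensMeasurableSpace X] {μ : Measure X}

theorem continuous_integral_mul_of_integrable {Y : Type*} [TopologicalSpace Y] [CompactSpace Y]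
    [FirstCountableTopology Y] {K : Y → X → ℝ} (hK : Continuous (Function.uncurry K)) {φ : X → ℝ}
    (hφ : Integrable φ μ) :
    Continuous fun y => ∫ x, K y x * φ x ∂μ := by
  obtain ⟨C, hC⟩ := isCompact_univ.exists_bound_of_continuousOn hK.continuousOn
  refine continuous_of_dominated (bound := fun x => C * ‖φ x‖)
    (fun y => ((hK.uncurry_left y).aestronglyMeasurable).mul hφ.1) (fun y => ?_)
    (hφ.norm.const_mul C) (ae_of_all _ fun x => (hK.uncurry_right x).mul continuous_const)
  refine ae_of_all _ fun x => ?_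
  rw [norm_mul]
  exact mul_le_mul_of_nonneg_right (hC (y, x) trivial) (norm_nonneg _)

theorem eq_of_integral_mul_eq_of_forall_le [IsFiniteMeasure μ] [μ.IsOpenPosMeasure] {k F : X → ℝ}
    (hk : Continuous k) (hk₀ : 0 ≤ k) (hk₁ : ∫ x, k x ∂μ = 1) (hF : Continuous F) {M : ℝ}
    (hFM : ∀ x, F x ≤ M) (hM : ∫ x, k x * F x ∂μ = M) {x : X} (hx : 0 < k x) : F x = M := by
  have integrable : ∀ {f : X → ℝ}, Continuous f → Integrable f μ := fun hf =>
    hf.integrable_of_hasCompactSupport (HasCompactSupport.of_compactSpace _)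
  have hg : Continuous fun y => k y * (M - F y) := hk.mul (continuous_const.sub hF)
  have hg₀ : ∫ y, k y * (M - F y) ∂μ = 0 := by
    simp only [mul_sub]
    rw [integral_sub (integrable (f := fun y => k y * M) (hk.mul continuous_const))
      (integrable (f := fun y => k y * F y) (hk.mul hF)), integral_mul_const, hk₁, hM, one_mul,
      sub_self]
  have hg_ae := (integral_eq_zero_iff_of_nonneg (fun y => mul_nonneg (hk₀ y)
    (sub_nonneg.2 (hFM y))) (integrable hg)).1 hg₀
  have hgx : k x * (M - F x) = 0 := congrFun ((hg.ae_eq_iff_eq μ continuous_const).1 hg_ae) x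
  linarith [(mul_eq_zero.1 hgx).resolve_left hx.ne']

end

section SphereMeasure

open Module RealInnerProductSpace
open scoped Pointwise

theorem MeasureTheory.Measure.toSphere_singleton {E : Type*} [NormedAddCommGroup E]
    [NormedSpace ℝ E] [FiniteDimensional ℝ E] [MeasurableSpace E] [BorelSpace E] (μ : Measure E)
    [μ.IsAddHaarMeasure] (hE : 2 ≤ finrank ℝ E) (p : sphere (0 : E) 1) :
    μ.toSphere {p} = 0 := by
  have hline : Set.Ioo (0 : ℝ) 1 • ((↑) '' {p} : Set E) ⊆ (ℝ ∙ (p : E) : Set E) := by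
    rintro _ ⟨r, -, _, ⟨p, rfl, rfl⟩, rfl⟩
    exact Submodule.smul_mem _ r (Submodule.mem_span_singleton_self _)
  have hne : (ℝ ∙ (p : E)) ≠ ⊤ := by
    intro h
    have := finrank_span_le_card (R := ℝ) ({(p : E)} : Set E)
    rw [h, finrank_top] at this
    simp at this
    omega
  rw [μ.toSphere_apply' (measurableSet_singleton p),
    measure_mono_null hline (Measure.addHaar_submodule μ _ hne), mul_zero]

theorem MeasureTheory.Measure.ae_toSphere_abs_inner_lt_one {E : Type*} [NormedAddCommGroup E]
    [InnerProductSpace ℝ E] [FiniteDimensional ℝ E] [MeasurableSpace E] [BorelSpace E]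
    (μ : Measure E) [μ.IsAddHaarMeasure] (hE : 2 ≤ finrank ℝ E)
    (m : sphere (0 : E) 1) :
    ∀ᵐ n : sphere (0 : E) 1 ∂μ.toSphere, |⟪(m : E), n⟫| < 1 := by
  have hm : ‖(m : E)‖ = 1 := norm_eq_of_mem_sphere m
  let m' : sphere (0 : E) 1 := ⟨-m, by simp [hm]⟩
  have hnull : μ.toSphere {m, m'} = 0 := measure_union_null
    (μ.toSphere_singleton hE m) (μ.toSphere_singleton hE m')
  refine measure_mono_null (fun n (hmn : ¬ |⟪(m : E), n⟫| < 1) => ?_) hnull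
  have hn : ‖(n : E)‖ = 1 := norm_eq_of_mem_sphere n
  have hle : |⟪(m : E), n⟫| ≤ 1 := by simpa [hm, hn] using abs_real_inner_le_norm (m : E) n
  rcases (abs_eq zero_le_one).1 (le_antisymm hle (not_lt.1 hmn)) with h | h
  · exact Or.inl (Subtype.ext ((inner_eq_one_iff_of_norm_eq_one hm hn).1 h).symm)
  · refine Or.inr (Subtype.ext ?_)
    simp [m', (inner_eq_neg_one_iff_of_norm_eq_one hm hn).1 h]

end SphereMeasure

instance : IsFiniteMeasure μS :=
  inferInstanceAs (IsFiniteMeasure (volume : Measure E3).toSphere)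

instance : μS.IsOpenPosMeasure :=
  inferInstanceAs ((volume : Measure E3).toSphere.IsOpenPosMeasure)

namespace IsScatteringKernel

open RealInnerProductSpace

variable {K : S2 → S2 → ℝ}

theorem eq_of_inner_eq (hK : IsScatteringKernel K) {m n m' n' : S2}
    (h : ⟪(m : E3), n⟫ = ⟪(m' : E3), n'⟫) : K m n = K m' n' := by
  obtain ⟨R, hR, hRm, hRn⟩ := exists_linearIsometryEquiv_det_eq_one_apply_eq_apply_eq
    finrank_euclideanSpace_fin.ge (by rw [norm_eq_of_mem_sphere, norm_eq_of_mem_sphere])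
    (by rw [norm_eq_of_mem_sphere, norm_eq_of_mem_sphere]) h
  rw [← hK.rotation_invariant R hR m n]
  congr 1 <;> exact Subtype.ext ‹_›

theorem symm (hK : IsScatteringKernel K) (m n : S2) : K m n = K n m :=
  hK.eq_of_inner_eq (real_inner_comm _ _)

theorem integral_right (hK : IsScatteringKernel K) (m : S2) : ∫ n, K m n ∂μS = 1 :=
  (integral_congr_ae (ae_of_all _ (hK.symm m))).trans (hK.normalized m)

theorem exists_pos_abs_inner_lt_one (hK : IsScatteringKernel K) (m : S2) :
    ∃ n, 0 < K m n ∧ |⟪(m : E3), n⟫| < 1 := by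
  by_contra! h
  have hzero : (fun n => K m n) =ᵐ[μS] fun _ => 0 := by
    filter_upwards [(volume : Measure E3).ae_toSphere_abs_inner_lt_one (by simp) m] with n hn
    exact le_antisymm (not_lt.1 fun hpos => (h n hpos).not_gt hn) (hK.nonneg m n)
  have h₁ := hK.integral_right m
  rw [integral_congr_ae hzero, integral_zero] at h₁
  exact zero_ne_one h₁

end IsScatteringKernel

/-- If `φ ∈ L^∞(S²)` satisfies `H[φ] = φ` almost everywhere, where `H` is the scattering
operator of a scattering kernel `K`, then `φ` is almost everywhere equal to a constant. -/
theorem scattering_fixedPoint_ae_const (K : S2 → S2 → ℝ) (hK : IsScatteringKernel K)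
    (φ : S2 → ℝ) (hφ : MemLp φ ⊤ μS)
    (hfix : (fun n => ∫ n' : S2, K n n' * φ n' ∂μS) =ᵐ[μS] φ) :
    ∃ c : ℝ, φ =ᵐ[μS] fun _ => c := by
  set F : S2 → ℝ := fun n => ∫ n' : S2, K n n' * φ n' ∂μS
  have hF : Continuous F :=
    continuous_integral_mul_of_integrable hK.continuous (hφ.integrable le_top)
  have hFfix : ∀ n, ∫ n', K n n' * F n' ∂μS = F n := fun n =>
    integral_congr_ae (hfix.mono fun n' h => congrArg (K n n' * ·) h)
  have : Nonempty S2 := (NormedSpace.sphere_nonempty.2 zero_le_one).to_subtype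
  obtain ⟨n₀, -, hn₀⟩ := isCompact_univ.exists_isMaxOn Set.univ_nonempty hF.continuousOn
  obtain ⟨p, hp, hp₁⟩ := hK.exists_pos_abs_inner_lt_one n₀
  have hmax : {n | F n = F n₀} = Set.univ := by
    refine eq_univ_of_forall_inner_eq_mem finrank_euclideanSpace_fin.ge hp₁
      (fun m hm n hmn => ?_) ⟨n₀, rfl⟩
    refine eq_of_integral_mul_eq_of_forall_le (hK.continuous.uncurry_left m) (hK.nonneg m)
      (hK.integral_right m) hF (fun x => hn₀ (Set.mem_univ x)) ((hFfix m).trans hm) ?_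
    rwa [hK.eq_of_inner_eq hmn]
  exact ⟨F n₀, hfix.symm.trans (ae_of_all _ fun n => (hmax ▸ Set.mem_univ n :))⟩
end
end

section
/- Let Ω ⊂ ℝ³ and let K : S² × S² × Ω × (0,∞) → ℝ be continuous such that for every (x,ν) ∈ Ω × (0,∞) the kernel K_{x,ν}(n,n') = K(n,n',x,ν) is non-negative, rotation invariant, and satisfies ∫_{S²} K_{x,ν}(n,n') dn = 1 for every n' ∈ S². If φ : S² × Ω × (0,∞) → ℝ is bounded and measurable and for every (x,ν) ∈ Ω × (0,∞) one has φ(n,x,ν) = ∫_{S²} K_{x,ν}(n,n') φ(n',x,ν) dn' for almost every n ∈ S², then for every (x,ν) the function n ↦ φ(n,x,ν) is almost everywhere equal to a constant c(x,ν). -/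
open MeasureTheory Metric

noncomputable section

/-
Rotation invariance makes each kernel symmetric: for `n, n' ∈ S²` the half-turn about the axis
through `n + n'` (or about an axis orthogonal to `n` when `n' = -n`) is a rotation exchanging
`n` and `n'`. The fixed point `f` agrees a.e. with `ψ = ∫ K(·, n') f(n') dn'`, which is
continuous and an everywhere fixed point. At a maximum point `n` of `ψ`, the identity
`∫ K(n, n') (max ψ - ψ(n')) dn' = 0` forces `ψ = max ψ` wherever `K(n, ·) > 0`; with symmetry
this makes `{ψ = max ψ}` open, and it is closed and nonempty, so it is all of the connected sphere.
-/

open scoped RealInnerProductSpace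

section KernelFixedPoint

variable {X : Type*} [TopologicalSpace X] [CompactSpace X] [MeasurableSpace X]
  [OpensMeasurableSpace X] {μ : Measure X} {k : X → X → ℝ}

theorem continuous_integral_kernel_mul [FirstCountableTopology X]
    (hk : Continuous (Function.uncurry k)) {f : X → ℝ} (hf : Integrable f μ) :
    Continuous fun x => ∫ y, k x y * f y ∂μ := by
  obtain ⟨B, hB⟩ := isCompact_univ.exists_bound_of_continuousOn hk.continuousOn
  refine continuous_of_dominated (bound := fun y => B * ‖f y‖)
    (fun x => ((hk.comp (Continuous.prodMk_right x)).aestronglyMeasurable).mul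
      hf.aestronglyMeasurable)
    (fun x => .of_forall fun y => ?_) (hf.norm.const_mul B)
    (.of_forall fun y => (hk.comp (Continuous.prodMk_left y)).mul continuous_const)
  rw [norm_mul]
  exact mul_le_mul_of_nonneg_right (hB (x, y) trivial) (norm_nonneg _)

variable [IsFiniteMeasure μ] [μ.IsOpenPosMeasure]

theorem eq_of_kernel_pos_of_le (hk : Continuous (Function.uncurry k)) (hk0 : ∀ x y, 0 ≤ k x y)
    (hnorm : ∀ x, ∫ y, k x y ∂μ = 1) {ψ : X → ℝ} (hψ : Continuous ψ)
    (hfix : ∀ x, ψ x = ∫ y, k x y * ψ y ∂μ) {M : ℝ} (hM : ∀ y, ψ y ≤ M) {x y : X}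
    (hx : ψ x = M) (hxy : 0 < k x y) : ψ y = M := by
  have hkx : Continuous (k x) := hk.comp (Continuous.prodMk_right x)
  have hint : ∀ g : X → ℝ, Continuous g → Integrable g μ := fun g hg =>
    hg.integrable_of_hasCompactSupport (.of_compactSpace g)
  set g : X → ℝ := fun z => k x z * (M - ψ z)
  have hg : Continuous g := hkx.mul (continuous_const.sub hψ)
  have hg_int : ∫ z, g z ∂μ = 0 := by
    simp only [g, mul_sub]
    rw [integral_sub (hint (fun z => k x z * M) (hkx.mul continuous_const))
      (hint (fun z => k x z * ψ z) (hkx.mul hψ)), integral_mul_const, hnorm, ← hfix, hx,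
      one_mul, sub_self]
  have hg_zero : g = fun _ => 0 := by
    rw [← Continuous.ae_eq_iff_eq μ hg continuous_const]
    exact (integral_eq_zero_iff_of_nonneg (fun z => mul_nonneg (hk0 x z) (sub_nonneg.2 (hM z)))
      (hint g hg)).1 hg_int
  have := congrFun hg_zero y
  simp only [g, mul_eq_zero, hxy.ne', false_or, sub_eq_zero] at this
  exact this.symm

theorem exists_eq_const_of_eq_integral_kernel [PreconnectedSpace X]
    (hk : Continuous (Function.uncurry k)) (hk0 : ∀ x y, 0 ≤ k x y) (hsymm : ∀ x y, k x y = k y x)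
    (hnorm : ∀ x, ∫ y, k x y ∂μ = 1) {ψ : X → ℝ} (hψ : Continuous ψ)
    (hfix : ∀ x, ψ x = ∫ y, k x y * ψ y ∂μ) : ∃ c, ∀ x, ψ x = c := by
  cases isEmpty_or_nonempty X
  · exact ⟨0, isEmptyElim⟩
  obtain ⟨x₀, -, hx₀⟩ := isCompact_univ.exists_isMaxOn Set.univ_nonempty hψ.continuousOn
  have hM : ∀ y, ψ y ≤ ψ x₀ := fun y => hx₀ (Set.mem_univ y)
  have propagate : ∀ {x y}, ψ x = ψ x₀ → 0 < k x y → ψ y = ψ x₀ :=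
    eq_of_kernel_pos_of_le hk hk0 hnorm hψ hfix hM
  have hopen : IsOpen {x | ψ x = ψ x₀} := by
    refine isOpen_iff_mem_nhds.2 fun x hx => ?_
    obtain ⟨y, hxy⟩ : ∃ y, 0 < k x y := by
      by_contra! h
      simpa [funext fun y => le_antisymm (h y) (hk0 x y)] using hnorm x
    have hy := propagate hx hxy
    have hyx : 0 < k y x := hsymm x y ▸ hxy
    exact Filter.mem_of_superset
      ((isOpen_lt continuous_const (hk.comp (Continuous.prodMk_right y))).mem_nhds hyx)
      fun z hz => propagate hy hz
  have hclopen : IsClopen {x | ψ x = ψ x₀} := ⟨isClosed_eq hψ continuous_const, hopen⟩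
  exact ⟨ψ x₀, fun x => (hclopen.eq_univ ⟨x₀, rfl⟩).superset (Set.mem_univ x)⟩

theorem ae_eq_const_of_ae_eq_integral_kernel [FirstCountableTopology X] [PreconnectedSpace X]
    (hk : Continuous (Function.uncurry k)) (hk0 : ∀ x y, 0 ≤ k x y) (hsymm : ∀ x y, k x y = k y x)
    (hnorm : ∀ x, ∫ y, k x y ∂μ = 1) {f : X → ℝ} (hf : Integrable f μ)
    (hfix : f =ᵐ[μ] fun x => ∫ y, k x y * f y ∂μ) : ∃ c, f =ᵐ[μ] fun _ => c := by
  set ψ := fun x => ∫ y, k x y * f y ∂μ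
  have hψfix : ∀ x, ψ x = ∫ y, k x y * ψ y ∂μ := fun x =>
    integral_congr_ae ((Filter.EventuallyEq.refl _ (k x)).mul hfix)
  obtain ⟨c, hc⟩ := exists_eq_const_of_eq_integral_kernel hk hk0 hsymm hnorm
    (continuous_integral_kernel_mul hk hf) hψfix
  exact ⟨c, hfix.trans (.of_forall hc)⟩

end KernelFixedPoint

theorem Submodule.reflection_span_add_apply_of_norm_eq {F : Type*} [NormedAddCommGroup F]
    [InnerProductSpace ℝ F] {v w : F} (h : ‖v‖ = ‖w‖) : (ℝ ∙ (v + w)).reflection v = w := by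
  have := reflection_sub (v := v) (w := -w) (by rwa [norm_neg])
  rwa [sub_neg_eq_add, reflection_orthogonal_apply, neg_inj] at this

theorem isRotation_reflection_span_singleton {a : E3} (ha : a ≠ 0) :
    IsRotation (ℝ ∙ a).reflection := by
  have : Fact (Module.finrank ℝ E3 = 2 + 1) := ⟨by simp⟩
  rw [IsRotation, Submodule.det_reflection, Submodule.finrank_orthogonal_span_singleton (n := 2) ha]
  norm_num

theorem exists_ne_zero_inner_eq_zero (v : E3) : ∃ a : E3, a ≠ 0 ∧ ⟪a, v⟫ = 0 := by
  have hrank := (ℝ ∙ v).finrank_add_finrank_orthogonal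
  have hle : Module.finrank ℝ (ℝ ∙ v) ≤ 1 := (finrank_span_le_card ({v} : Set E3)).trans (by simp)
  obtain ⟨a, ha, ha0⟩ := Submodule.exists_mem_ne_zero_of_ne_bot (p := (ℝ ∙ v)ᗮ) fun hbot => by
    rw [hbot, finrank_bot, finrank_euclideanSpace_fin] at hrank
    omega
  exact ⟨a, ha0, Submodule.inner_left_of_mem_orthogonal (Submodule.mem_span_singleton_self v) ha⟩

theorem exists_isRotation_swap {v w : E3} (h : ‖v‖ = ‖w‖) :
    ∃ R : E3 ≃ₗᵢ[ℝ] E3, IsRotation R ∧ R v = w ∧ R w = v := by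
  by_cases hvw : v + w = 0
  · obtain ⟨a, ha, hav⟩ := exists_ne_zero_inner_eq_zero v
    have hRv : (ℝ ∙ a).reflection v = -v :=
      Submodule.reflection_mem_subspace_orthogonalComplement_eq_neg
        (Submodule.mem_orthogonal_singleton_iff_inner_right.2 hav)
    rw [eq_neg_of_add_eq_zero_right hvw]
    exact ⟨_, isRotation_reflection_span_singleton ha, hRv, by rw [map_neg, hRv, neg_neg]⟩
  · have hRv := Submodule.reflection_span_add_apply_of_norm_eq h
    refine ⟨_, isRotation_reflection_span_singleton hvw, hRv, ?_⟩
    have := Submodule.reflection_reflection (ℝ ∙ (v + w)) v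
    rwa [hRv] at this

theorem symm_of_rotation_invariant {k : S2 → S2 → ℝ}
    (hk : ∀ R : E3 ≃ₗᵢ[ℝ] E3, IsRotation R → ∀ n n' : S2, k (rotate R n) (rotate R n') = k n n')
    (n n' : S2) : k n n' = k n' n := by
  obtain ⟨R, hR, hn, hn'⟩ := exists_isRotation_swap (v := (n : E3)) (w := n')
    (by rw [norm_eq_of_mem_sphere, norm_eq_of_mem_sphere])
  have := hk R hR n n'
  rwa [show rotate R n = n' from Subtype.ext hn, show rotate R n' = n from Subtype.ext hn',
    eq_comm] at this

instance inst_s6 : IsFiniteMeasure μS := by unfold μS; infer_instance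

instance inst_s6_2 : μS.IsOpenPosMeasure := by unfold μS; infer_instance

instance : PreconnectedSpace S2 :=
  Subtype.preconnectedSpace
    (isConnected_sphere (by simp [← Module.finrank_eq_rank]) 0 zero_le_one).isPreconnected

theorem IsScatteringKernel.ae_eq_const_of_ae_eq_integral {k : S2 → S2 → ℝ}
    (hK : IsScatteringKernel k) {f : S2 → ℝ} (hf : Integrable f μS)
    (hfix : f =ᵐ[μS] fun n => ∫ n', k n n' * f n' ∂μS) : ∃ c, f =ᵐ[μS] fun _ => c :=
  have hsymm := symm_of_rotation_invariant hK.rotation_invariant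
  ae_eq_const_of_ae_eq_integral_kernel hK.continuous hK.nonneg hsymm
    (fun n => by simpa only [hsymm n] using hK.normalized n) hf hfix

/-- For a continuous family `K_{x,ν}` of non-negative, normalized, rotation invariant kernels
parameterized by `(x,ν) ∈ Ω × (0,∞)`, any bounded measurable `φ : S² × Ω × (0,∞) → ℝ` which is,
for every `(x,ν)`, an a.e. fixed point of the corresponding scattering operator is, for every
`(x,ν)`, almost everywhere equal to a constant `c(x,ν)`. -/
theorem fixedPoint_family_ae_const (Ω : Set E3)
    (K : S2 → S2 → Ω → Set.Ioi (0 : ℝ) → ℝ)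
    (hcont : Continuous fun p : S2 × S2 × Ω × Set.Ioi (0 : ℝ) => K p.1 p.2.1 p.2.2.1 p.2.2.2)
    (hnonneg : ∀ (x : Ω) (ν : Set.Ioi (0 : ℝ)) (n n' : S2), 0 ≤ K n n' x ν)
    (hnorm : ∀ (x : Ω) (ν : Set.Ioi (0 : ℝ)) (n' : S2), ∫ n : S2, K n n' x ν ∂μS = 1)
    (hrot : ∀ (x : Ω) (ν : Set.Ioi (0 : ℝ)) (R : E3 ≃ₗᵢ[ℝ] E3), IsRotation R →
      ∀ n n' : S2, K (rotate R n) (rotate R n') x ν = K n n' x ν)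
    (φ : S2 → Ω → Set.Ioi (0 : ℝ) → ℝ)
    (hmeas : Measurable fun p : S2 × Ω × Set.Ioi (0 : ℝ) => φ p.1 p.2.1 p.2.2)
    (hbdd : ∃ C : ℝ, ∀ (n : S2) (x : Ω) (ν : Set.Ioi (0 : ℝ)), |φ n x ν| ≤ C)
    (hfix : ∀ (x : Ω) (ν : Set.Ioi (0 : ℝ)),
      (fun n => φ n x ν) =ᵐ[μS] fun n => ∫ n' : S2, K n n' x ν * φ n' x ν ∂μS) :
    ∀ (x : Ω) (ν : Set.Ioi (0 : ℝ)), ∃ c : ℝ, (fun n => φ n x ν) =ᵐ[μS] fun _ => c := by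
  intro x ν
  obtain ⟨C, hC⟩ := hbdd
  have hK : IsScatteringKernel fun n n' => K n n' x ν :=
    { continuous := hcont.comp (f := fun p : S2 × S2 => (p.1, p.2, x, ν)) (by fun_prop)
      nonneg := hnonneg x ν
      normalized := hnorm x ν
      rotation_invariant := hrot x ν }
  have hφ : Integrable (fun n => φ n x ν) μS :=
    .of_bound (hmeas.comp (f := fun n : S2 => (n, x, ν)) (by fun_prop)).aestronglyMeasurable C
      (.of_forall fun n => hC n x ν)
  exact hK.ae_eq_const_of_ae_eq_integral hφ (hfix x ν)
end
end
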